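/- Let ι be a finite index type and let p, q : ι → ℝ³ be two families of points such that (i) ‖p a − p b‖ = ‖q a − q b‖ for all a, b ∈ ι, and (ii) ⟪(p b − p a) ×₃ (p c − p a), p d − p a⟫ = ⟪(q b − q a) ×₃ (q c − q a), q d − q a⟫ for all a, b, c, d ∈ ι. Then there exist a 3×3 real matrix R with Rᵀ R = 1 and det R = 1 (i.e., R ∈ SO(3)) and a vector t ∈ ℝ³ such that q a = R (p a) + t for all a ∈ ι. -/

import Mathlib

open scoped RealInnerProductSpace Matrix

/-- The cross product `a ×₃ b` of two vectors in ℝ³, regarded as an element of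
`EuclideanSpace ℝ (Fin 3)` (it is definitionally `crossProduct a b`). -/
noncomputable def cross3 (a b : EuclideanSpace ℝ (Fin 3)) : EuclideanSpace ℝ (Fin 3) :=
  WithLp.toLp 2 (a.ofLp ⨯₃ b.ofLp)

/-- The action of a 3×3 matrix on a vector of ℝ³ by matrix–vector multiplication
(definitionally `Matrix.mulVec`, regarded as valued in `EuclideanSpace ℝ (Fin 3)`). -/
def matVec (R : Matrix (Fin 3) (Fin 3) ℝ) (x : EuclideanSpace ℝ (Fin 3)) :
    EuclideanSpace ℝ (Fin 3) :=
  WithLp.toLp 2 (R.mulVec x.ofLp)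

local notation "E3" => EuclideanSpace ℝ (Fin 3)

lemma inner_cross3_eq_det (a b c : E3) :
    ⟪cross3 a b, c⟫ = Matrix.det (Matrix.of ![(a : Fin 3 → ℝ), b, c]) := by
  simp [cross3, cross_apply, PiLp.inner_apply, RCLike.inner_apply, Matrix.det_fin_three,
    Fin.sum_univ_three]
  ring

lemma det_mulVec_rows (M : Matrix (Fin 3) (Fin 3) ℝ) (x y z : Fin 3 → ℝ) :
    Matrix.det (Matrix.of ![M.mulVec x, M.mulVec y, M.mulVec z])
      = M.det * Matrix.det (Matrix.of ![x, y, z]) := by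
  have h : Matrix.of ![M.mulVec x, M.mulVec y, M.mulVec z] = Matrix.of ![x, y, z] * Mᵀ := by
    ext i j
    fin_cases i <;>
      simp [Matrix.mul_apply, Matrix.mulVec, dotProduct, mul_comm]
  rw [h, Matrix.det_mul, Matrix.det_transpose, mul_comm]

lemma span_ne_top_of_triples_zero {ι : Type*} (v : ι → E3)
    (h : ∀ b c d : ι, Matrix.det (Matrix.of ![(v b : Fin 3 → ℝ), v c, v d]) = 0) :
    Submodule.span ℝ (Set.range v) ≠ ⊤ := by
  intro htop
  obtain ⟨s, hssub, hsspan, hsli⟩ := exists_linearIndependent ℝ (Set.range v)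
  rw [htop] at hsspan
  let B : Module.Basis s ℝ E3 := Module.Basis.mk hsli (by rw [Subtype.range_coe, hsspan])
  haveI : Fintype s := FiniteDimensional.fintypeBasisIndex B
  have hcard : Fintype.card s = 3 := by
    have := Module.finrank_eq_card_basis B
    rw [finrank_euclideanSpace_fin] at this
    omega
  let e : Fin 3 ≃ s := (Fintype.equivFinOfCardEq hcard).symm
  have hli : LinearIndependent ℝ (fun i : Fin 3 => ((e i : s) : Fin 3 → ℝ)) :=
    (hsli.comp e e.injective).map' (WithLp.linearEquiv 2 ℝ (Fin 3 → ℝ)).toLinearMap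
      (LinearEquiv.ker _)
  have hunit : IsUnit (Matrix.of (fun i : Fin 3 => ((e i : s) : Fin 3 → ℝ))) := by
    rw [← Matrix.linearIndependent_rows_iff_isUnit]
    exact hli
  obtain ⟨b0, hb0⟩ := hssub (e 0).2
  obtain ⟨b1, hb1⟩ := hssub (e 1).2
  obtain ⟨b2, hb2⟩ := hssub (e 2).2
  have hAeq : Matrix.of (fun i : Fin 3 => ((e i : s) : Fin 3 → ℝ))
      = Matrix.of ![(v b0 : Fin 3 → ℝ), v b1, v b2] := by
    ext i j
    fin_cases i <;> simp [← hb0, ← hb1, ← hb2]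
  rw [hAeq] at hunit
  rw [Matrix.isUnit_iff_isUnit_det, isUnit_iff_ne_zero] at hunit
  exact hunit (h b0 b1 b2)

noncomputable def reflMat (w : Fin 3 → ℝ) : Matrix (Fin 3) (Fin 3) ℝ :=
  1 - (2:ℝ) • Matrix.vecMulVec w w

lemma reflMat_transpose (w : Fin 3 → ℝ) : (reflMat w)ᵀ = reflMat w := by
  ext i j
  simp [reflMat, Matrix.vecMulVec_apply, Matrix.one_apply, eq_comm, mul_comm]

lemma reflMat_mul_self (w : Fin 3 → ℝ) (hw : w 0 ^ 2 + w 1 ^ 2 + w 2 ^ 2 = 1) :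
    reflMat w * reflMat w = 1 := by
  have hPP : Matrix.vecMulVec w w * Matrix.vecMulVec w w = Matrix.vecMulVec w w := by
    ext i j
    simp [Matrix.mul_apply, Matrix.vecMulVec_apply, Fin.sum_univ_three]
    linear_combination (w i * w j) * hw
  rw [reflMat, sub_mul, mul_sub, mul_sub]
  simp only [Matrix.smul_mul, Matrix.mul_smul, one_mul, mul_one, smul_smul, hPP]
  norm_num
  module

lemma reflMat_det (w : Fin 3 → ℝ) (hw : w 0 ^ 2 + w 1 ^ 2 + w 2 ^ 2 = 1) :
    (reflMat w).det = -1 := by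
  simp [reflMat, Matrix.det_fin_three, Matrix.vecMulVec_apply, Matrix.one_apply]
  linear_combination (-2 : ℝ) * hw

lemma reflMat_mulVec_eq_self (w : Fin 3 → ℝ) (x : Fin 3 → ℝ)
    (hx : w 0 * x 0 + w 1 * x 1 + w 2 * x 2 = 0) :
    (reflMat w).mulVec x = x := by
  ext i
  simp [reflMat, Matrix.mulVec, dotProduct, Matrix.vecMulVec_apply, Matrix.one_apply,
    Fin.sum_univ_three, sub_mul]
  linear_combination (2 * w i) * hx

lemma exists_isometry_map_eq {ι : Type*} [Fintype ι] (u v : ι → E3)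
    (hin : ∀ a b, ⟪u a, u b⟫ = ⟪v a, v b⟫) :
    ∃ T : E3 →ₗᵢ[ℝ] E3, ∀ a, T (u a) = v a := by
  classical
  set F : (ι → ℝ) →ₗ[ℝ] E3 := Fintype.linearCombination ℝ u with hF
  set G : (ι → ℝ) →ₗ[ℝ] E3 := Fintype.linearCombination ℝ v with hG
  have hFG : ∀ c d : ι → ℝ, ⟪F c, F d⟫ = ⟪G c, G d⟫ := by
    intro c d
    simp only [hF, hG, Fintype.linearCombination_apply, sum_inner, inner_sum,
      real_inner_smul_left, real_inner_smul_right]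
    exact Finset.sum_congr rfl fun a _ => Finset.sum_congr rfl fun b _ => by rw [hin b a]
  have hker : LinearMap.ker F ≤ LinearMap.ker G := by
    intro c hc
    rw [LinearMap.mem_ker] at hc ⊢
    have h0 : ⟪G c, G c⟫ = 0 := by rw [← hFG, hc, inner_zero_left]
    exact inner_self_eq_zero.mp h0
  set h : LinearMap.range F →ₗ[ℝ] E3 :=
    (Submodule.liftQ (LinearMap.ker F) G hker).comp F.quotKerEquivRange.symm.toLinearMap with hh
  have happ : ∀ c : ι → ℝ, h ⟨F c, LinearMap.mem_range_self F c⟩ = G c := by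
    intro c
    have h1 : F.quotKerEquivRange.symm ⟨F c, LinearMap.mem_range_self F c⟩
        = (LinearMap.ker F).mkQ c := LinearMap.quotKerEquivRange_symm_apply_image F c _
    simp only [hh, LinearMap.comp_apply, LinearEquiv.coe_toLinearMap, h1]
    exact Submodule.liftQ_apply _ _ _
  have hnorm : ∀ x : LinearMap.range F, ‖h x‖ = ‖x‖ := by
    rintro ⟨x, hx⟩
    obtain ⟨c, rfl⟩ := hx
    rw [happ c]
    have h1 : ‖(⟨F c, LinearMap.mem_range_self F c⟩ : LinearMap.range F)‖ = ‖F c‖ := rfl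
    rw [h1]
    have h2 := hFG c c
    rw [real_inner_self_eq_norm_sq, real_inner_self_eq_norm_sq] at h2
    nlinarith [norm_nonneg (F c), norm_nonneg (G c)]
  set L : LinearMap.range F →ₗᵢ[ℝ] E3 := ⟨h, hnorm⟩ with hL
  refine ⟨L.extend, fun a => ?_⟩
  have hu : F (Pi.single a 1) = u a := by
    rw [hF, Fintype.linearCombination_apply_single, one_smul]
  have hmem : u a ∈ LinearMap.range F := ⟨Pi.single a 1, hu⟩
  have h1 : L.extend (u a) = L ⟨u a, hmem⟩ := L.extend_apply ⟨u a, hmem⟩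
  rw [h1]
  have h2 : (⟨u a, hmem⟩ : LinearMap.range F)
      = ⟨F (Pi.single a 1), LinearMap.mem_range_self F _⟩ := Subtype.ext hu.symm
  show h _ = v a
  rw [h2, happ]
  rw [hG, Fintype.linearCombination_apply_single, one_smul]

lemma exists_matrix_of_isometry (T : E3 →ₗᵢ[ℝ] E3) :
    ∃ M : Matrix (Fin 3) (Fin 3) ℝ, Mᵀ * M = 1 ∧ ∀ x : E3, M.mulVec x = T x := by
  classical
  set f : (Fin 3 → ℝ) →ₗ[ℝ] (Fin 3 → ℝ) := (WithLp.linearEquiv 2 ℝ (Fin 3 → ℝ)).toLinearMap ∘ₗ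
    T.toLinearMap ∘ₗ (WithLp.linearEquiv 2 ℝ (Fin 3 → ℝ)).symm.toLinearMap with hf
  set M : Matrix (Fin 3) (Fin 3) ℝ := LinearMap.toMatrix' f with hM
  have hmul : ∀ x : E3, M.mulVec x = T x := by
    intro x
    have : Matrix.toLin' M x.ofLp = f x.ofLp := by rw [hM, Matrix.toLin'_toMatrix']
    rw [Matrix.toLin'_apply] at this
    exact this
  refine ⟨M, ?_, hmul⟩
  ext i j
  have hcol : ∀ k : Fin 3, M.mulVec (EuclideanSpace.single k (1:ℝ)) = fun l => M l k := by
    intro k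
    ext l
    simp [Matrix.mulVec, dotProduct, EuclideanSpace.single_apply]
  have hinner := T.inner_map_map (EuclideanSpace.single i (1:ℝ)) (EuclideanSpace.single j (1:ℝ))
  have hl : ⟪T (EuclideanSpace.single i (1:ℝ)), T (EuclideanSpace.single j (1:ℝ))⟫
      = ∑ k, M k i * M k j := by
    simp only [PiLp.inner_apply, RCLike.inner_apply, conj_trivial]
    rw [← hmul, ← hmul, hcol i, hcol j]
    simp [mul_comm]
  have hr : ⟪(EuclideanSpace.single i (1:ℝ) : E3), EuclideanSpace.single j (1:ℝ)⟫
      = if i = j then (1:ℝ) else 0 := by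
    rw [EuclideanSpace.inner_single_left]
    simp [EuclideanSpace.single_apply, eq_comm]
  rw [hl, hr] at hinner
  simp only [Matrix.mul_apply, Matrix.one_apply, Matrix.transpose_apply]
  rw [hinner]

/-- Completeness direction of Proposition 1 of ComENet: two finite configurations of points
in ℝ³ with equal pairwise distances and equal signed orientation data (scalar triple
products of relative positions) are related by a direct rigid motion `x ↦ R x + t`
with `R ∈ SO(3)`. -/
theorem exists_SO3_translation_of_dist_and_orientation_eq
    {ι : Type*} [Fintype ι]
    (p q : ι → EuclideanSpace ℝ (Fin 3))
    (hdist : ∀ a b : ι, ‖p a - p b‖ = ‖q a - q b‖)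
    (horient : ∀ a b c d : ι,
      ⟪cross3 (p b - p a) (p c - p a), p d - p a⟫ =
        ⟪cross3 (q b - q a) (q c - q a), q d - q a⟫) :
    ∃ (R : Matrix (Fin 3) (Fin 3) ℝ) (t : EuclideanSpace ℝ (Fin 3)),
      Rᵀ * R = 1 ∧ R.det = 1 ∧ ∀ a : ι, q a = matVec R (p a) + t := by
  classical
  rcases isEmpty_or_nonempty ι with hι | hι
  · exact ⟨1, 0, by simp, by simp, fun a => isEmptyElim a⟩
  obtain ⟨a₀⟩ := hι
  set u : ι → E3 := fun a => p a - p a₀ with hu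
  set v : ι → E3 := fun a => q a - q a₀ with hv
  -- equal inner products
  have hin : ∀ a b, ⟪u a, u b⟫ = ⟪v a, v b⟫ := by
    intro a b
    have h1 := norm_sub_sq_real (u a) (u b)
    have h2 := norm_sub_sq_real (v a) (v b)
    have e1 : ‖u a‖ = ‖v a‖ := hdist a a₀
    have e2 : ‖u b‖ = ‖v b‖ := hdist b a₀
    have e3 : ‖u a - u b‖ = ‖v a - v b‖ := by
      have : u a - u b = p a - p b := by rw [hu]; beta_reduce; abel
      have h' : v a - v b = q a - q b := by rw [hv]; beta_reduce; abel
      rw [this, h']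
      exact hdist a b
    rw [e1, e2, e3] at h1
    linarith
  obtain ⟨T, hT⟩ := exists_isometry_map_eq u v hin
  obtain ⟨M, hMo, hMmul⟩ := exists_matrix_of_isometry T
  have hMv : ∀ a, M.mulVec (u a) = v a := fun a => (hMmul (u a)).trans (congrArg WithLp.ofLp (hT a))
  have hMdet : M.det = 1 ∨ M.det = -1 := by
    have hd := congrArg Matrix.det hMo
    rw [Matrix.det_mul, Matrix.det_transpose, Matrix.det_one] at hd
    exact mul_self_eq_one_iff.mp hd
  have htriple : ∀ b c d, Matrix.det (Matrix.of ![(u b : Fin 3 → ℝ), u c, u d])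
      = Matrix.det (Matrix.of ![(v b : Fin 3 → ℝ), v c, v d]) := by
    intro b c d
    have h := horient a₀ b c d
    rw [inner_cross3_eq_det, inner_cross3_eq_det] at h
    exact h
  have hvM : ∀ b c d, Matrix.det (Matrix.of ![(v b : Fin 3 → ℝ), v c, v d])
      = M.det * Matrix.det (Matrix.of ![(u b : Fin 3 → ℝ), u c, u d]) := by
    intro b c d
    rw [← det_mulVec_rows, hMv b, hMv c, hMv d]
  -- common conclusion
  have final : ∀ R : Matrix (Fin 3) (Fin 3) ℝ, Rᵀ * R = 1 → R.det = 1 →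
      (∀ a, R.mulVec (u a) = v a) →
      ∃ (R' : Matrix (Fin 3) (Fin 3) ℝ) (t : EuclideanSpace ℝ (Fin 3)),
        R'ᵀ * R' = 1 ∧ R'.det = 1 ∧ ∀ a : ι, q a = matVec R' (p a) + t := by
    intro R h1 h2 h3
    refine ⟨R, q a₀ - matVec R (p a₀), h1, h2, fun a => ?_⟩
    have hsub : R.mulVec ((p a : Fin 3 → ℝ) - p a₀) = R.mulVec (p a) - R.mulVec (p a₀) :=
      Matrix.mulVec_sub R _ _
    have h4 : (matVec R (p a) : E3) - matVec R (p a₀) = q a - q a₀ := by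
      have h3' := congrArg (WithLp.toLp 2) (h3 a)
      rw [matVec, matVec, ← WithLp.toLp_sub, ← hsub]
      exact h3'
    have h5 : q a = (q a - q a₀) + q a₀ := by abel
    rw [h5, ← h4]
    abel
  by_cases hcase : ∀ b c d, Matrix.det (Matrix.of ![(u b : Fin 3 → ℝ), u c, u d]) = 0
  · rcases hMdet with h1 | h1
    · exact final M hMo h1 hMv
    · -- det M = -1 : compose with a reflection fixing all the v's
      have hvz : ∀ b c d, Matrix.det (Matrix.of ![(v b : Fin 3 → ℝ), v c, v d]) = 0 := by
        intro b c d
        rw [← htriple]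
        exact hcase b c d
      have hne := span_ne_top_of_triples_zero v hvz
      have hbot : (Submodule.span ℝ (Set.range v))ᗮ ≠ ⊥ := by
        intro hb
        exact hne (Submodule.orthogonal_eq_bot_iff.mp hb)
      obtain ⟨w₀, hw₀mem, hw₀ne⟩ := (Submodule.ne_bot_iff _).mp hbot
      set w : E3 := ‖w₀‖⁻¹ • w₀ with hwdef
      have hwmem : w ∈ (Submodule.span ℝ (Set.range v))ᗮ := Submodule.smul_mem _ _ hw₀mem
      have hwnorm : ‖w‖ = 1 := norm_smul_inv_norm hw₀ne
      have hww : w 0 ^ 2 + w 1 ^ 2 + w 2 ^ 2 = 1 := by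
        have h2 : ⟪w, w⟫ = 1 := by rw [real_inner_self_eq_norm_sq, hwnorm]; norm_num
        simp only [PiLp.inner_apply, RCLike.inner_apply, conj_trivial,
          Fin.sum_univ_three] at h2
        linear_combination h2
      have hworth : ∀ a, w 0 * (v a) 0 + w 1 * (v a) 1 + w 2 * (v a) 2 = 0 := by
        intro a
        have hva : v a ∈ Submodule.span ℝ (Set.range v) :=
          Submodule.subset_span ⟨a, rfl⟩
        have h0 : ⟪v a, w⟫ = 0 := Submodule.inner_right_of_mem_orthogonal hva hwmem
        simp only [PiLp.inner_apply, RCLike.inner_apply, conj_trivial,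
          Fin.sum_univ_three] at h0
        linear_combination h0
      refine final (reflMat w * M) ?_ ?_ ?_
      · rw [Matrix.transpose_mul, reflMat_transpose, mul_assoc,
          ← mul_assoc (reflMat w) (reflMat w) M, reflMat_mul_self w hww, one_mul, hMo]
      · rw [Matrix.det_mul, reflMat_det w hww, h1]
        norm_num
      · intro a
        rw [← Matrix.mulVec_mulVec, hMv a]
        exact reflMat_mulVec_eq_self w _ (hworth a)
  · push_neg at hcase
    obtain ⟨b, c, d, hbcd⟩ := hcase
    have h1 : M.det = 1 := by
      have h := (htriple b c d).trans (hvM b c d)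
      have h' : M.det * (Matrix.of ![(u b : Fin 3 → ℝ), u c, u d]).det
          = 1 * (Matrix.of ![(u b : Fin 3 → ℝ), u c, u d]).det := by
        rw [one_mul]; exact h.symm
      exact mul_right_cancel₀ hbcd h'
    exact final M hMo h1 hMv
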